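/- Fix t ≥ 1, ρ ∈ [0,1], and a symmetric positive definite d×d real matrix Σ0. With A_t^ρ = √(ᾱ_t) Σ0 ( ∏_{i=0}^{t−1} ( I + (1/2) ρ (β_{i+1}/α_{i+1}) Σ_i^{-1} ) ) Σ_t^{-1} and B_t^ρ = (1/2)(2−ρ) ( ∑_{i=2}^{t} ᾱ_{i−1} β_i Σ0 ( ∏_{j=0}^{i−2} ( I + (1/2) ρ (β_{j+1}/α_{j+1}) Σ_j^{-1} ) ) Σ_{i−1}^{-1} Σ_i^{-1} + β_1 Σ_1^{-1} ), one has the exact identity √(ᾱ_t) A_t^ρ + B_t^ρ = I. (Consequently, if Z_t has mean √(ᾱ_t) μ0, then the reconstruction A_t^ρ Z_t + B_t^ρ μ0 has mean μ0 for every ρ ∈ [0,1].) -/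

import Mathlib

open Matrix

/-!
With `Tₖ = ᾱₖ Σ₀ ∏_{i<k} (I + γᵢ Σᵢ⁻¹) Σₖ⁻¹`, where `γᵢ = ρ βᵢ₊₁ / (2 αᵢ₊₁)`, the recursion
`Σₖ₊₁ = αₖ₊₁ Σₖ + βₖ₊₁ I` gives `Tₖ - Tₖ₊₁ = ((2 - ρ)/2) ᾱₖ βₖ₊₁ Σ₀ ∏_{i<k} (…) Σₖ⁻¹ Σₖ₊₁⁻¹`,
which is the `(k+1)`-st summand of `B_t^ρ` (the lone term `β₁ Σ₁⁻¹` being the summand for `k = 0`),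
because `αₖ₊₁ γₖ + ((2 - ρ)/2) βₖ₊₁ = βₖ₊₁`. Telescoping from `T₀ = I` gives `T_t + B_t^ρ = I`,
and `T_t = √ᾱ_t A_t^ρ`. Only right multiplications occur, so no commutativity is needed.
-/

theorem Finset.prod_mem_Ioc_zero_one {ι R : Type*} [CommSemiring R] [PartialOrder R]
    [IsStrictOrderedRing R] {s : Finset ι} {f : ι → R} (h : ∀ i ∈ s, f i ∈ Set.Ioc 0 1) :
    ∏ i ∈ s, f i ∈ Set.Ioc 0 1 :=
  ⟨prod_pos fun i hi => (h i hi).1, prod_le_one (fun i hi => (h i hi).1.le) fun i hi => (h i hi).2⟩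

theorem Finset.sum_Icc_two_add_eq_sum_range {M : Type*} [AddCommMonoid M] {f : ℕ → M} {x : M}
    {t : ℕ} (ht : 1 ≤ t) (hx : x = f 1) : ∑ i ∈ Icc 2 t, f i + x = ∑ k ∈ range t, f (k + 1) := by
  rw [hx, show Icc 2 t = Ioc 1 t from Icc_add_one_left_eq_Ioc 1 t, sum_Ioc_add_eq_sum_Icc ht,
    range_eq_Ico, sum_Ico_add' f 0 t 1, Ico_add_one_right_eq_Icc]

theorem Matrix.PosDef.smul_add_smul_one {n R : Type*} [Fintype n] [DecidableEq n] [Field R]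
    [PartialOrder R] [IsOrderedRing R] [StarRing R] [StarOrderedRing R]
    {M : Matrix n n R} (hM : M.PosDef) {a b : R} (ha : 0 < a) (hb : 0 ≤ b) :
    (a • M + b • 1).PosDef :=
  (hM.smul ha).add_posSemidef (PosSemidef.one.smul hb)

namespace Matrix

variable {n R : Type*} [Fintype n] [DecidableEq n] [CommRing R]

theorem smul_mul_one_add_smul_inv_mul_inv_add {P S S' : Matrix n n R} {a b c g : R}
    (hS : IsUnit S.det) (hS' : IsUnit S'.det) (hrec : S' = a • S + b • 1)
    (hcoef : a * g + c = b) :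
    a • (P * (1 + g • S⁻¹) * S'⁻¹) + c • (P * S⁻¹ * S'⁻¹) = P * S⁻¹ := by
  set Y := P * S⁻¹
  have hYS' : Y * S' = a • P + b • Y := by
    rw [hrec, mul_add, mul_smul_comm, mul_smul_comm, mul_one, mul_assoc, nonsing_inv_mul _ hS,
      mul_one]
  calc a • (P * (1 + g • S⁻¹) * S'⁻¹) + c • (Y * S'⁻¹)
      = (a • P + (a * g + c) • Y) * S'⁻¹ := by
        simp only [Y, mul_add, mul_one, mul_smul_comm, add_mul, smul_mul_assoc, add_smul,
          smul_add, smul_smul]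
        abel
    _ = Y := by rw [hcoef, ← hYS', mul_assoc, mul_nonsing_inv _ hS', mul_one]

theorem smul_prod_mul_inv_add_smul_sum_eq_one {t : ℕ} {S : ℕ → Matrix n n R}
    {a b m g : ℕ → R} {c : R}
    (hdet : ∀ k ≤ t, IsUnit (S k).det)
    (hrec : ∀ k < t, S (k + 1) = a (k + 1) • S k + b (k + 1) • 1)
    (hm0 : m 0 = 1) (hm : ∀ k < t, m (k + 1) = m k * a (k + 1))
    (hcoef : ∀ k < t, a (k + 1) * g k + c * b (k + 1) = b (k + 1)) :
    let P k := S 0 * ((List.range k).map fun i => 1 + g i • (S i)⁻¹).prod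
    m t • (P t * (S t)⁻¹) +
      c • ∑ k ∈ Finset.range t, (m k * b (k + 1)) • (P k * (S k)⁻¹ * (S (k + 1))⁻¹) = 1 := by
  intro P
  set T : ℕ → Matrix n n R := fun k => m k • (P k * (S k)⁻¹)
  have hstep : ∀ k < t,
      T k - T (k + 1) = c • (m k * b (k + 1)) • (P k * (S k)⁻¹ * (S (k + 1))⁻¹) := by
    intro k hk
    have hP : P (k + 1) = P k * (1 + g k • (S k)⁻¹) := by
      simp only [P, List.range_succ, List.map_append, List.prod_append, List.map_singleton,
        List.prod_singleton, mul_assoc]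
    have h := smul_mul_one_add_smul_inv_mul_inv_add (P := P k) (hdet k hk.le) (hdet (k + 1) hk)
      (hrec k hk) (hcoef k hk)
    conv_lhs => rw [show T k = m k • (P k * (S k)⁻¹) from rfl, ← h]
    simp only [T, hP, hm k hk]
    module
  have hT0 : T 0 = 1 := by
    simp [T, P, hm0, mul_nonsing_inv _ (hdet 0 (Nat.zero_le t))]
  rw [Finset.smul_sum, ← Finset.sum_congr rfl fun k hk => hstep k (Finset.mem_range.mp hk),
    Finset.sum_range_sub', hT0]
  abel

end Matrix

theorem stmt_2_general (d t : ℕ) (ht : 1 ≤ t)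
    (ρ : ℝ)
    (β : ℕ → ℝ) (hβ : ∀ k, 1 ≤ k → k ≤ t → β k ∈ Set.Ioo (0:ℝ) 1)
    (al : ℕ → ℝ) (hal : ∀ k, al k = 1 - β k)
    (alb : ℕ → ℝ) (halb : ∀ k, alb k = ∏ i ∈ Finset.Icc 1 k, al i)
    (S0 : Matrix (Fin d) (Fin d) ℝ) (hS0 : S0.PosDef)
    (S : ℕ → Matrix (Fin d) (Fin d) ℝ)
    (hS : ∀ k, S k = alb k • S0 + (1 - alb k) • (1 : Matrix (Fin d) (Fin d) ℝ))
    (A B : Matrix (Fin d) (Fin d) ℝ)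
    (hA : A = Real.sqrt (alb t) •
      (S0 *
        ((List.range t).map (fun i =>
          (1 : Matrix (Fin d) (Fin d) ℝ) +
            ((1/2) * ρ * (β (i+1) / al (i+1))) • (S i)⁻¹)).prod *
        (S t)⁻¹))
    (hB : B = ((1/2) * (2 - ρ)) •
      ((∑ i ∈ Finset.Icc 2 t, (alb (i-1) * β i) •
          (S0 *
            ((List.range (i-1)).map (fun j =>
              (1 : Matrix (Fin d) (Fin d) ℝ) +
                ((1/2) * ρ * (β (j+1) / al (j+1))) • (S j)⁻¹)).prod *
            (S (i-1))⁻¹ * (S i)⁻¹))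
        + β 1 • (S 1)⁻¹)) :
    Real.sqrt (alb t) • A + B = (1 : Matrix (Fin d) (Fin d) ℝ) ∧
    ∀ μ0 : Fin d → ℝ, A.mulVec (Real.sqrt (alb t) • μ0) + B.mulVec μ0 = μ0 := by
  have hal_pos : ∀ k, 1 ≤ k → k ≤ t → 0 < al k := fun k h1 h2 => by
    linarith [hal k, (hβ k h1 h2).2]
  have halb_mem : ∀ k ≤ t, alb k ∈ Set.Ioc 0 1 := fun k hk => halb k ▸
    Finset.prod_mem_Ioc_zero_one fun i hi => by
      obtain ⟨h1, h2⟩ := Finset.mem_Icc.mp hi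
      exact ⟨hal_pos i h1 (h2.trans hk), by linarith [hal i, (hβ i h1 (h2.trans hk)).1]⟩
  have hdet : ∀ k ≤ t, IsUnit (S k).det := fun k hk => by
    rw [hS, ← isUnit_iff_isUnit_det]
    exact (hS0.smul_add_smul_one (halb_mem k hk).1 (sub_nonneg.2 (halb_mem k hk).2)).isUnit
  have halb0 : alb 0 = 1 := by simp [halb]
  have hS00 : S 0 = S0 := by simp [hS, halb0]
  have halb_succ : ∀ k, alb (k + 1) = alb k * al (k + 1) := fun k => by
    rw [halb, halb, Finset.prod_Icc_succ_top (Nat.le_add_left 1 k)]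
  have hrec : ∀ k, S (k + 1) = al (k + 1) • S k + β (k + 1) • 1 := fun k => by
    rw [hS, hS, halb_succ, hal]
    module
  have hcoef : ∀ k < t, al (k + 1) * ((1/2) * ρ * (β (k + 1) / al (k + 1))) +
      (1/2) * (2 - ρ) * β (k + 1) = β (k + 1) := fun k hk => by
    field_simp [(hal_pos (k + 1) (by omega) hk).ne']
    ring
  have hsum := smul_prod_mul_inv_add_smul_sum_eq_one hdet (fun k _ => hrec k) halb0
    (fun k _ => halb_succ k) hcoef
  have hmain : Real.sqrt (alb t) • A + B = 1 := by
    rw [hA, hB, smul_smul, Real.mul_self_sqrt (halb_mem t le_rfl).1.le,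
      Finset.sum_Icc_two_add_eq_sum_range ht ?_, ← hS00]
    · simpa only [Nat.add_sub_cancel] using hsum
    · simp [halb0, hS00, mul_nonsing_inv _ (hS00 ▸ hdet 0 (Nat.zero_le t))]
  refine ⟨hmain, fun μ0 => ?_⟩
  rw [mulVec_smul, ← smul_mulVec, ← add_mulVec, hmain, one_mulVec]

/-- The exact identity `√(ᾱ_t) A_t^ρ + B_t^ρ = I` for the coefficient matrices of the
score-scaled PF-ODE; consequently the reconstruction `A_t^ρ Z_t + B_t^ρ μ0` has mean `μ0`
whenever `Z_t` has mean `√(ᾱ_t) μ0`. -/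
theorem stmt_2 (d t : ℕ) (hd : 1 ≤ d) (ht : 1 ≤ t)
    (ρ : ℝ) (hρ : ρ ∈ Set.Icc (0:ℝ) 1)
    (β : ℕ → ℝ) (hβ : ∀ k, 1 ≤ k → k ≤ t → β k ∈ Set.Ioo (0:ℝ) 1)
    (al : ℕ → ℝ) (hal : ∀ k, al k = 1 - β k)
    (alb : ℕ → ℝ) (halb : ∀ k, alb k = ∏ i ∈ Finset.Icc 1 k, al i)
    (S0 : Matrix (Fin d) (Fin d) ℝ) (hS0 : S0.PosDef)
    (S : ℕ → Matrix (Fin d) (Fin d) ℝ)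
    (hS : ∀ k, S k = alb k • S0 + (1 - alb k) • (1 : Matrix (Fin d) (Fin d) ℝ))
    (A B : Matrix (Fin d) (Fin d) ℝ)
    (hA : A = Real.sqrt (alb t) •
      (S0 *
        ((List.range t).map (fun i =>
          (1 : Matrix (Fin d) (Fin d) ℝ) +
            ((1/2) * ρ * (β (i+1) / al (i+1))) • (S i)⁻¹)).prod *
        (S t)⁻¹))
    (hB : B = ((1/2) * (2 - ρ)) •
      ((∑ i ∈ Finset.Icc 2 t, (alb (i-1) * β i) •
          (S0 *
            ((List.range (i-1)).map (fun j =>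
              (1 : Matrix (Fin d) (Fin d) ℝ) +
                ((1/2) * ρ * (β (j+1) / al (j+1))) • (S j)⁻¹)).prod *
            (S (i-1))⁻¹ * (S i)⁻¹))
        + β 1 • (S 1)⁻¹)) :
    Real.sqrt (alb t) • A + B = (1 : Matrix (Fin d) (Fin d) ℝ) ∧
    ∀ μ0 : Fin d → ℝ, A.mulVec (Real.sqrt (alb t) • μ0) + B.mulVec μ0 = μ0 :=
  stmt_2_general d t ht ρ β hβ al hal alb halb S0 hS0 S hS A B hA hB
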